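/- Let ρ₀ ∈ [-1,1) and define ρ_{ℓ+1} = ρ_ℓ + (1/π)·( √(1-ρ_ℓ²) − ρ_ℓ·arccos ρ_ℓ ) for ℓ ≥ 0. Then ρ_ℓ < 1 for every ℓ, and there exists a constant c > 0 (depending on ρ₀) such that for all ℓ ≥ 1, 1 − ρ_ℓ ≥ c / ℓ². -/

import Mathlib

open Real

private lemma deriv_p (x : ℝ) :
    HasDerivAt (fun θ : ℝ => sin θ - θ * cos θ) (x * sin x) x := by
  have h := (Real.hasDerivAt_sin x).sub ((hasDerivAt_id x).mul (Real.hasDerivAt_cos x))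
  refine h.congr_deriv ?_
  simp only [id_eq]
  ring

private lemma aux_L1 {θ : ℝ} (h0 : 0 ≤ θ) (hπ : θ ≤ π) : 0 ≤ sin θ - θ * cos θ := by
  have hmono : MonotoneOn (fun θ : ℝ => sin θ - θ * cos θ) (Set.Icc 0 π) := by
    apply monotoneOn_of_deriv_nonneg (convex_Icc 0 π)
    · exact (Real.continuous_sin.sub (continuous_id.mul Real.continuous_cos)).continuousOn
    · intro x hx
      exact (deriv_p x).differentiableAt.differentiableWithinAt
    · intro x hx
      rw [interior_Icc] at hx
      rw [(deriv_p x).deriv]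
      exact mul_nonneg hx.1.le (Real.sin_nonneg_of_nonneg_of_le_pi hx.1.le hx.2.le)
  have := hmono (Set.left_mem_Icc.2 Real.pi_pos.le) ⟨h0, hπ⟩ h0
  simpa using this

private lemma deriv_h (x : ℝ) :
    HasDerivAt (fun θ : ℝ => θ ^ 3 / 3 - sin θ + θ * cos θ) (x * (x - sin x)) x := by
  have h := (((hasDerivAt_pow 3 x).div_const 3).sub (Real.hasDerivAt_sin x)).add
    ((hasDerivAt_id x).mul (Real.hasDerivAt_cos x))
  refine h.congr_deriv ?_
  simp only [id_eq]
  ring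

private lemma aux_L2 {θ : ℝ} (h0 : 0 ≤ θ) : sin θ - θ * cos θ ≤ θ ^ 3 / 3 := by
  have hmono : MonotoneOn (fun θ : ℝ => θ ^ 3 / 3 - sin θ + θ * cos θ) (Set.Ici 0) := by
    apply monotoneOn_of_deriv_nonneg (convex_Ici 0)
    · exact ((continuous_pow 3).div_const 3 |>.sub Real.continuous_sin
        |>.add (continuous_id.mul Real.continuous_cos)).continuousOn
    · intro x hx
      exact (deriv_h x).differentiableAt.differentiableWithinAt
    · intro x hx
      rw [interior_Ici] at hx
      rw [(deriv_h x).deriv]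
      exact mul_nonneg hx.le (by linarith [Real.sin_le hx.le])
  have := hmono (Set.self_mem_Ici) h0 h0
  simp only [Real.sin_zero, Real.cos_zero] at this
  nlinarith [this]

/-- `g θ = π (1 - cos θ) - (sin θ - θ cos θ)` -/
noncomputable def gfun (θ : ℝ) : ℝ := π * (1 - cos θ) - (sin θ - θ * cos θ)

private lemma deriv_g (x : ℝ) : HasDerivAt gfun ((π - x) * sin x) x := by
  have h := ((hasDerivAt_const x π).mul ((hasDerivAt_const x 1).sub (Real.hasDerivAt_cos x))).sub
    (deriv_p x)
  refine h.congr_deriv ?_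
  ring

private lemma aux_g_strictMono : StrictMonoOn gfun (Set.Icc 0 π) := by
  apply strictMonoOn_of_deriv_pos (convex_Icc 0 π)
  · exact (continuous_const.mul (continuous_const.sub Real.continuous_cos) |>.sub
      (Real.continuous_sin.sub (continuous_id.mul Real.continuous_cos))).continuousOn
  · intro x hx
    rw [interior_Icc] at hx
    rw [(deriv_g x).deriv]
    exact mul_pos (by linarith [hx.2]) (Real.sin_pos_of_pos_of_lt_pi hx.1 hx.2)

private lemma aux_g_pos {θ : ℝ} (h0 : 0 < θ) (hπ : θ ≤ π) : 0 < gfun θ := by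
  have := aux_g_strictMono (Set.left_mem_Icc.2 Real.pi_pos.le) ⟨h0.le, hπ⟩ h0
  simpa [gfun] using this

/-- exact one-step identity: `1 - ρ' = gfun (arccos ρ) / π` -/
private lemma step_identity {ρ : ℝ} (h1 : -1 ≤ ρ) (h2 : ρ ≤ 1) :
    1 - (ρ + (1 / π) * (Real.sqrt (1 - ρ ^ 2) - ρ * Real.arccos ρ))
      = gfun (Real.arccos ρ) / π := by
  have hπ := Real.pi_pos
  rw [gfun, Real.cos_arccos h1 h2, ← Real.sin_arccos]
  field_simp
  ring

private lemma one_sub_self_lt {ρ : ℝ} (h1 : -1 ≤ ρ) (h2 : ρ < 1) :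
    0 < gfun (Real.arccos ρ) / π :=
  div_pos (aux_g_pos (Real.arccos_pos.2 h2) (Real.arccos_le_pi ρ)) Real.pi_pos

/-- the key step lower bound: `1 - ρ' ≥ ε - K ε √ε` where `ε = 1 - ρ`,
`K = π^2/(6√2)`. -/
private lemma step_lower {ρ : ℝ} (h1 : -1 ≤ ρ) (h2 : ρ ≤ 1) :
    (1 - ρ) - (π ^ 2 / (6 * Real.sqrt 2)) * ((1 - ρ) * Real.sqrt (1 - ρ))
      ≤ gfun (Real.arccos ρ) / π := by
  set θ := Real.arccos ρ with hθ
  have hθ0 : 0 ≤ θ := Real.arccos_nonneg ρ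
  have hθπ : θ ≤ π := Real.arccos_le_pi ρ
  have hcos : cos θ = ρ := Real.cos_arccos h1 h2
  have hπ := Real.pi_pos
  -- Jordan : 2/π² θ² ≤ 1 - cos θ
  have hjordan : 2 / π ^ 2 * θ ^ 2 ≤ 1 - ρ := by
    have := Real.cos_le_one_sub_mul_cos_sq (x := θ) (by rwa [abs_of_nonneg hθ0])
    rw [hcos] at this; linarith
  have hε0 : (0:ℝ) ≤ 1 - ρ := by linarith
  -- θ ≤ (π/√2) √(1-ρ)
  have hπ0 : (π : ℝ) ≠ 0 := Real.pi_ne_zero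
  have hθsq : θ ^ 2 ≤ π ^ 2 / 2 * (1 - ρ) := by
    have h := mul_le_mul_of_nonneg_left hjordan (by positivity : (0:ℝ) ≤ π ^ 2 / 2)
    calc θ ^ 2 = π ^ 2 / 2 * (2 / π ^ 2 * θ ^ 2) := by field_simp
    _ ≤ _ := h
  have hθle : θ ≤ π / Real.sqrt 2 * Real.sqrt (1 - ρ) := by
    have h2pos : (0:ℝ) < Real.sqrt 2 := Real.sqrt_pos.2 (by norm_num)
    have hrhs : (0:ℝ) ≤ π / Real.sqrt 2 * Real.sqrt (1 - ρ) := by positivity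
    have : θ ^ 2 ≤ (π / Real.sqrt 2 * Real.sqrt (1 - ρ)) ^ 2 := by
      rw [mul_pow, div_pow, Real.sq_sqrt (by norm_num : (0:ℝ) ≤ 2),
        Real.sq_sqrt hε0]
      exact hθsq
    nlinarith
  -- step bound : sin θ - θ cos θ ≤ θ³/3 ≤ ...
  have hstep : sin θ - θ * cos θ ≤ θ ^ 3 / 3 := aux_L2 hθ0
  have hθ3 : θ ^ 3 ≤ (π / Real.sqrt 2 * Real.sqrt (1 - ρ)) ^ 3 := by
    have := pow_le_pow_left₀ hθ0 hθle 3
    exact this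
  have h2pos : (0:ℝ) < Real.sqrt 2 := Real.sqrt_pos.2 (by norm_num)
  have hsq2 : Real.sqrt 2 ^ 2 = 2 := Real.sq_sqrt (by norm_num)
  have hsqε : Real.sqrt (1 - ρ) ^ 2 = 1 - ρ := Real.sq_sqrt hε0
  have hrw : (π / Real.sqrt 2 * Real.sqrt (1 - ρ)) ^ 3
      = π ^ 3 / (2 * Real.sqrt 2) * ((1 - ρ) * Real.sqrt (1 - ρ)) := by
    have h3 : Real.sqrt (1 - ρ) ^ 3 = (1 - ρ) * Real.sqrt (1 - ρ) := by
      rw [pow_succ, hsqε]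
    have h23 : Real.sqrt 2 ^ 3 = 2 * Real.sqrt 2 := by rw [pow_succ, hsq2]
    rw [mul_pow, div_pow, h3, h23]
  have hconst : π ^ 3 / (2 * Real.sqrt 2) / 3 = π * (π ^ 2 / (6 * Real.sqrt 2)) := by
    field_simp
    ring
  have hfinal : π * ((1 - ρ) - π ^ 2 / (6 * Real.sqrt 2) * ((1 - ρ) * Real.sqrt (1 - ρ)))
      ≤ gfun θ := by
    rw [gfun, hcos]
    have hub : sin θ - θ * ρ ≤ π * (π ^ 2 / (6 * Real.sqrt 2)) * ((1 - ρ) * Real.sqrt (1 - ρ)) := by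
      have h1 : sin θ - θ * ρ ≤ θ ^ 3 / 3 := by rw [← hcos]; exact hstep
      have h2 : θ ^ 3 / 3 ≤ π ^ 3 / (2 * Real.sqrt 2) / 3 * ((1 - ρ) * Real.sqrt (1 - ρ)) := by
        rw [hrw] at hθ3
        linarith
      rw [hconst] at h2
      linarith
    nlinarith [hub]
  rw [le_div_iff₀ hπ]
  nlinarith [hfinal]

private lemma cube_diff {x y : ℝ} (hy : 0 ≤ y) (hxy : y ≤ x) :
    x ^ 2 * x - y ^ 2 * y ≤ 3 * x * (x ^ 2 - y ^ 2) := by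
  nlinarith [mul_nonneg (sub_nonneg.2 hxy) (sq_nonneg x),
    mul_nonneg (mul_nonneg (sub_nonneg.2 hxy) (le_trans hy hxy)) hy,
    mul_nonneg hy (sq_nonneg (x - y))]

private lemma small_case {K c ε N : ℝ} (hK0 : 0 < K) (hc0 : 0 < c) (hN1 : 1 ≤ N)
    (haε : c / N ^ 2 ≤ ε) (hε0 : 0 < ε)
    (h3K : 3 * K * Real.sqrt ε ≤ 1) (hKc : K * Real.sqrt c ≤ 1 / 3) :
    c / (N + 1) ^ 2 ≤ ε - K * (ε * Real.sqrt ε) := by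
  have hN0 : (0:ℝ) < N := by linarith
  set a : ℝ := c / N ^ 2 with ha
  have ha0 : 0 < a := div_pos hc0 (by positivity)
  have hsa : Real.sqrt a ≤ Real.sqrt ε := Real.sqrt_le_sqrt haε
  have hcube : ε * Real.sqrt ε - a * Real.sqrt a ≤ 3 * Real.sqrt ε * (ε - a) := by
    have h := cube_diff (Real.sqrt_nonneg a) hsa
    rw [Real.sq_sqrt hε0.le, Real.sq_sqrt ha0.le] at h
    linarith
  have hφ : a - K * (a * Real.sqrt a) ≤ ε - K * (ε * Real.sqrt ε) := by
    have h1 := mul_le_mul_of_nonneg_left hcube hK0.le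
    have h2 := mul_nonneg (sub_nonneg.2 haε) (sub_nonneg.2 h3K)
    nlinarith [h1, h2]
  have hsqa : Real.sqrt a = Real.sqrt c / N := by
    rw [ha, Real.sqrt_div hc0.le, Real.sqrt_sq hN0.le]
  have hstep2 : c / (N + 1) ^ 2 ≤ a - K * (a * Real.sqrt a) := by
    rw [ha, hsqa]
    have e1 : K * (c / N ^ 2 * (Real.sqrt c / N)) = K * Real.sqrt c * c / N ^ 3 := by
      field_simp
    rw [e1]
    have e2 : K * Real.sqrt c * c / N ^ 3 ≤ 1 / 3 * c / N ^ 3 := by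
      apply div_le_div_of_nonneg_right ?_ (by positivity)
      have h := mul_le_mul_of_nonneg_right hKc hc0.le
      linarith [h]
    have e3 : c / (N + 1) ^ 2 ≤ c / N ^ 2 - 1 / 3 * c / N ^ 3 := by
      have h3 : 0 ≤ c * N ^ 3 := mul_nonneg hc0.le (by positivity)
      have h4 : 0 ≤ c * N ^ 4 := mul_nonneg hc0.le (by positivity)
      have hdiff : c * N ^ 2 ≤ c * N ^ 4 := by
        have h := mul_nonneg (mul_nonneg (mul_nonneg hc0.le (sq_nonneg N))
          (sub_nonneg.2 hN1)) (by linarith : (0:ℝ) ≤ N + 1)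
        nlinarith [h]
      rw [div_le_iff₀ (by positivity), sub_mul]
      rw [div_mul_eq_mul_div, div_mul_eq_mul_div, div_mul_eq_mul_div,
        div_sub_div _ _ (by positivity : (N ^ 2) ≠ 0) (by positivity : (N ^ 3) ≠ 0),
        le_div_iff₀ (by positivity)]
      ring_nf
      nlinarith [h3, h4, hdiff]
    linarith
  linarith

set_option maxHeartbeats 1000000 in
theorem corr_recursion_lower_bound (ρ₀ : ℝ) (hρ₀ : ρ₀ ∈ Set.Ico (-1 : ℝ) 1)
    (ρs : ℕ → ℝ) (h0 : ρs 0 = ρ₀)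
    (hrec : ∀ ℓ : ℕ, ρs (ℓ + 1)
      = ρs ℓ + (1 / π) * (Real.sqrt (1 - ρs ℓ ^ 2) - ρs ℓ * Real.arccos (ρs ℓ))) :
    (∀ ℓ : ℕ, ρs ℓ < 1) ∧
    ∃ c > 0, ∀ ℓ : ℕ, 1 ≤ ℓ → c / (ℓ : ℝ) ^ 2 ≤ 1 - ρs ℓ := by
  obtain ⟨hρ₀l, hρ₀u⟩ := hρ₀
  have hπ := Real.pi_pos
  have hπ3 := Real.pi_gt_three
  have hπ0 : (π : ℝ) ≠ 0 := Real.pi_ne_zero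
  have hs2 : (0:ℝ) < Real.sqrt 2 := Real.sqrt_pos.2 (by norm_num)
  have hsq2 : Real.sqrt 2 ^ 2 = 2 := Real.sq_sqrt (by norm_num)
  -- invariant
  have hinv : ∀ ℓ, -1 ≤ ρs ℓ ∧ ρs ℓ < 1 := by
    intro ℓ
    induction ℓ with
    | zero => rw [h0]; exact ⟨hρ₀l, hρ₀u⟩
    | succ n ih =>
      obtain ⟨ih1, ih2⟩ := ih
      have hid : 1 - ρs (n + 1) = gfun (Real.arccos (ρs n)) / π := by
        rw [hrec n]; exact step_identity ih1 ih2.le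
      have hpos := one_sub_self_lt ih1 ih2
      constructor
      · have hL1 := aux_L1 (Real.arccos_nonneg (ρs n)) (Real.arccos_le_pi (ρs n))
        rw [Real.sin_arccos, Real.cos_arccos ih1 ih2.le] at hL1
        have hstep : 0 ≤ (1 / π) * (Real.sqrt (1 - ρs n ^ 2) - ρs n * Real.arccos (ρs n)) := by
          apply mul_nonneg (by positivity)
          nlinarith [hL1]
        rw [hrec n]; linarith
      · linarith [hid ▸ hpos]
  refine ⟨fun ℓ => (hinv ℓ).2, ?_⟩
  -- constants
  set K : ℝ := π ^ 2 / (6 * Real.sqrt 2) with hK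
  have hK0 : 0 < K := by positivity
  set δ : ℝ := gfun (Real.arccos (1 - 8 / π ^ 4)) / π with hδ
  have hx1 : (0:ℝ) < 8 / π ^ 4 := by positivity
  have h9 : 9 ≤ π ^ 2 := by nlinarith [hπ3]
  have h81 : 81 ≤ π ^ 4 := by nlinarith [h9]
  have hx2 : 8 / π ^ 4 ≤ 2 := by
    rw [div_le_iff₀ (by positivity)]
    nlinarith [h81]
  have hδ0 : 0 < δ := one_sub_self_lt (by linarith) (by linarith)
  clear_value δ
  have hε1 : 0 < 1 - ρs 1 := by linarith [(hinv 1).2]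
  set c : ℝ := min (min (1 - ρs 1) (8 / π ^ 4)) (4 * δ) with hc
  have hc0 : 0 < c := lt_min (lt_min hε1 hx1) (by linarith)
  have hc1 : c ≤ 1 - ρs 1 := le_trans (min_le_left _ _) (min_le_left _ _)
  have hc2 : c ≤ 8 / π ^ 4 := le_trans (min_le_left _ _) (min_le_right _ _)
  have hc3 : c ≤ 4 * δ := min_le_right _ _
  clear_value c
  -- sqrt of 8/π⁴
  have hsqrt8 : Real.sqrt (8 / π ^ 4) = 2 * Real.sqrt 2 / π ^ 2 := by
    rw [show (8:ℝ) / π ^ 4 = (2 * Real.sqrt 2 / π ^ 2) ^ 2 by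
      rw [div_pow, mul_pow, hsq2]; ring_nf]
    exact Real.sqrt_sq (by positivity)
  have hK3 : 3 * K * Real.sqrt (8 / π ^ 4) = 1 := by
    rw [hsqrt8, hK]
    field_simp
    ring
  have hKdef := hK
  clear_value K
  refine ⟨c, hc0, ?_⟩
  intro ℓ hℓ
  induction ℓ, hℓ using Nat.le_induction with
  | base => simpa using hc1
  | succ n hn ihn =>
    obtain ⟨h1, h2⟩ := hinv n
    set ρ := ρs n with hρ
    set ε : ℝ := 1 - ρ with hε
    have hε0 : 0 < ε := by simp only [hε]; linarith
    have hid : 1 - ρs (n + 1) = gfun (Real.arccos ρ) / π := by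
      rw [hrec n]; exact step_identity h1 h2.le
    have hN1 : (1:ℝ) ≤ (n:ℝ) := by exact_mod_cast hn
    have hN0 : (0:ℝ) < (n:ℝ) := by linarith
    by_cases hcase : ε ≤ 8 / π ^ 4
    · -- small ε case
      have hstepL := step_lower h1 h2.le
      rw [← hKdef] at hstepL
      have hbound : ε - K * (ε * Real.sqrt ε) ≤ 1 - ρs (n + 1) := by
        rw [hid]
        calc ε - K * (ε * Real.sqrt ε)
            = (1 - ρ) - K * ((1 - ρ) * Real.sqrt (1 - ρ)) := by rw [hε]
        _ ≤ _ := hstepL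
      have hsε8 : Real.sqrt ε ≤ Real.sqrt (8 / π ^ 4) := Real.sqrt_le_sqrt hcase
      have h3K : 3 * K * Real.sqrt ε ≤ 1 := by
        have h := mul_le_mul_of_nonneg_left hsε8 (by positivity : (0:ℝ) ≤ 3 * K)
        linarith [hK3, h]
      have hsc8 : Real.sqrt c ≤ Real.sqrt (8 / π ^ 4) := Real.sqrt_le_sqrt hc2
      have hKc : K * Real.sqrt c ≤ 1 / 3 := by
        have h := mul_le_mul_of_nonneg_left hsc8 hK0.le
        linarith [hK3, h]
      have hsc := small_case hK0 hc0 hN1 ihn hε0 h3K hKc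
      have hcast : ((n:ℝ) + 1) = ((n + 1 : ℕ) : ℝ) := by push_cast; ring
      rw [← hcast]
      linarith [hsc, hbound]
    · -- large ε case : 1 - ρs (n+1) ≥ δ
      push_neg at hcase
      have hρle : ρ ≤ 1 - 8 / π ^ 4 := by simp only [hε] at hcase; linarith
      have hmem1 : ρ ∈ Set.Icc (-1:ℝ) 1 := ⟨h1, h2.le⟩
      have hmem2 : (1 - 8 / π ^ 4) ∈ Set.Icc (-1:ℝ) 1 := ⟨by linarith, by linarith⟩
      have hθ : Real.arccos (1 - 8 / π ^ 4) ≤ Real.arccos ρ :=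
        Real.strictAntiOn_arccos.antitoneOn hmem1 hmem2 hρle
      have hg : gfun (Real.arccos (1 - 8 / π ^ 4)) ≤ gfun (Real.arccos ρ) :=
        aux_g_strictMono.monotoneOn ⟨Real.arccos_nonneg _, Real.arccos_le_pi _⟩
          ⟨Real.arccos_nonneg _, Real.arccos_le_pi _⟩ hθ
      have hδle : δ ≤ 1 - ρs (n + 1) := by
        rw [hid, hδ]
        exact div_le_div_of_nonneg_right hg hπ.le
      have hn2 : (2:ℝ) ≤ ((n:ℝ) + 1) := by
        have : (1:ℝ) ≤ (n:ℝ) := by exact_mod_cast hn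
        linarith
      have : c / ((n:ℝ) + 1) ^ 2 ≤ c / 4 := by
        apply div_le_div_of_nonneg_left hc0.le (by norm_num)
        nlinarith [hn2]
      have hcast : ((n:ℝ) + 1) = ((n + 1 : ℕ) : ℝ) := by push_cast; ring
      rw [← hcast]
      linarith
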